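/- Let a, b ∈ H² and set m = ( Im(a·b) + i·|a − conj(b)|·√(Im(a)·Im(b)) ) / Im(a+b). Then Im(m) > 0, ρ(a,m) = ρ(m,b), and ρ(a,m) + ρ(m,b) = ρ(a,b); that is, m is the hyperbolic midpoint of a and b in H². -/

import Mathlib

open Complex ComplexConjugate

/-- The inverse hyperbolic tangent. -/
noncomputable def artanh (x : ℝ) : ℝ := Real.log ((1 + x) / (1 - x)) / 2

/-- The hyperbolic metric of the upper half plane:
`ρ(a,b) = 2·artanh(|a − b| / |a − conj(b)|)`. -/
noncomputable def rhoH (a b : ℂ) : ℝ :=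
  2 * artanh (‖a - b‖ / ‖a - conj b‖)

/-!
Write `r(z, w) = |z - w| / |z - conj w|`, so that `ρ = 2 artanh r`. With `L = |a - conj b|` and
`u = √(Im a · Im b)`, a direct computation gives `r(a, m)² = (L - 2u) / (L + 2u) =: R²`, while
`|a - b|² = L² - 4u²` gives `r(a, b) = 2R / (1 + R²)`. The doubling formula
`artanh (2R / (1 + R²)) = 2 artanh R` then yields `ρ(a, m) = ρ(a, b) / 2`, and since `m` is
symmetric in `a` and `b`, also `ρ(m, b) = ρ(a, b) / 2`.
-/

lemma artanh_two_mul_div_one_add_sq (R : ℝ) :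
    artanh (2 * R / (1 + R ^ 2)) = 2 * artanh R := by
  have hR : 1 + R ^ 2 ≠ 0 := by positivity
  have hnum : 1 + 2 * R / (1 + R ^ 2) = (1 + R) ^ 2 / (1 + R ^ 2) := by field_simp; ring
  have hden : 1 - 2 * R / (1 + R ^ 2) = (1 - R) ^ 2 / (1 + R ^ 2) := by field_simp; ring
  rw [artanh, artanh, hnum, hden, div_div_div_cancel_right₀ hR, ← div_pow, Real.log_pow]
  ring

lemma two_mul_sqrt_div_one_add_sq {L c : ℝ} (hc : 0 ≤ c) (hcL : c ≤ L) (hL : 0 < L) :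
    2 * √((L - c) / (L + c)) / (1 + √((L - c) / (L + c)) ^ 2) = √(L ^ 2 - c ^ 2) / L := by
  have hLc : 0 < L + c := by linarith
  have hsq : √((L - c) / (L + c)) * (L + c) = √(L ^ 2 - c ^ 2) := by
    have hfac : L ^ 2 - c ^ 2 = (L - c) / (L + c) * (L + c) ^ 2 := by field_simp; ring
    rw [hfac, Real.sqrt_mul (div_nonneg (by linarith) hLc.le), Real.sqrt_sq hLc.le]
  rw [Real.sq_sqrt (div_nonneg (by linarith) hLc.le), ← hsq]
  have hden : 1 + (L - c) / (L + c) = 2 * L / (L + c) := by field_simp; ring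
  rw [hden]
  field_simp

lemma norm_sub_conj_comm (a b : ℂ) : ‖a - conj b‖ = ‖b - conj a‖ := by
  rw [← norm_conj, map_sub, conj_conj, norm_sub_rev]

lemma rhoH_comm (a b : ℂ) : rhoH a b = rhoH b a := by
  rw [rhoH, rhoH, norm_sub_rev a b, norm_sub_conj_comm]

lemma normSq_sub_conj (z w : ℂ) : normSq (z - conj w) = normSq (z - w) + 4 * z.im * w.im := by
  simp only [normSq_apply, sub_re, sub_im, conj_re, conj_im]
  ring

noncomputable def hypMidpoint (a b : ℂ) : ℂ :=
  ((((a * b).im : ℝ) : ℂ) + I * ((‖a - conj b‖ * √(a.im * b.im) : ℝ) : ℂ)) /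
    ((((a + b).im : ℝ) : ℂ))

lemma hypMidpoint_comm (a b : ℂ) : hypMidpoint a b = hypMidpoint b a := by
  rw [hypMidpoint, hypMidpoint, mul_comm a, add_comm a, mul_comm a.im, norm_sub_conj_comm]

lemma hypMidpoint_re (a b : ℂ) :
    (hypMidpoint a b).re = (a.re * b.im + a.im * b.re) / (a.im + b.im) := by
  rw [hypMidpoint, div_ofReal_re]
  simp

lemma hypMidpoint_im (a b : ℂ) :
    (hypMidpoint a b).im = ‖a - conj b‖ * √(a.im * b.im) / (a.im + b.im) := by
  rw [hypMidpoint, div_ofReal_im]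
  simp

lemma sq_norm_sub_conj (z w : ℂ) :
    ‖z - conj w‖ ^ 2 = (z.re - w.re) ^ 2 + (z.im + w.im) ^ 2 := by
  rw [Complex.sq_norm, normSq_apply]
  simp only [sub_re, sub_im, conj_re, conj_im]
  ring

section
variable {a b : ℂ}

lemma normSq_sub_hypMidpoint (ha : 0 < a.im) (hb : 0 < b.im) :
    normSq (a - hypMidpoint a b) = a.im * ‖a - conj b‖ *
      (‖a - conj b‖ - 2 * √(a.im * b.im)) / (a.im + b.im) := by
  have hL := sq_norm_sub_conj a b
  have hu : √(a.im * b.im) ^ 2 = a.im * b.im := Real.sq_sqrt (by positivity)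
  have hst : a.im + b.im ≠ 0 := by positivity
  rw [normSq_apply]
  simp only [sub_re, sub_im, hypMidpoint_re, hypMidpoint_im]
  generalize √(a.im * b.im) = u at hu ⊢
  field_simp
  linear_combination (-a.im ^ 2) * hL + ‖a - conj b‖ ^ 2 * hu

lemma normSq_sub_conj_hypMidpoint (ha : 0 < a.im) (hb : 0 < b.im) :
    normSq (a - conj (hypMidpoint a b)) = a.im * ‖a - conj b‖ *
      (‖a - conj b‖ + 2 * √(a.im * b.im)) / (a.im + b.im) := by
  have hL := sq_norm_sub_conj a b
  have hu : √(a.im * b.im) ^ 2 = a.im * b.im := Real.sq_sqrt (by positivity)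
  have hst : a.im + b.im ≠ 0 := by positivity
  rw [normSq_apply]
  simp only [sub_re, sub_im, conj_re, conj_im, hypMidpoint_re, hypMidpoint_im]
  generalize √(a.im * b.im) = u at hu ⊢
  field_simp
  linear_combination (-a.im ^ 2) * hL + ‖a - conj b‖ ^ 2 * hu

lemma add_im_le_norm_sub_conj (a b : ℂ) : a.im + b.im ≤ ‖a - conj b‖ := by
  simpa using (a - conj b).im_le_norm

lemma two_mul_sqrt_mul_le_norm_sub_conj (ha : 0 < a.im) (hb : 0 < b.im) :
    2 * √(a.im * b.im) ≤ ‖a - conj b‖ := by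
  refine le_trans ?_ (add_im_le_norm_sub_conj a b)
  nlinarith [Real.sq_sqrt (by positivity : 0 ≤ a.im * b.im), Real.sqrt_nonneg (a.im * b.im),
    sq_nonneg (a.im - b.im)]

lemma norm_sub_eq_sqrt (hab : 0 ≤ a.im * b.im) :
    ‖a - b‖ = √(‖a - conj b‖ ^ 2 - (2 * √(a.im * b.im)) ^ 2) := by
  rw [norm_def, Complex.sq_norm, normSq_sub_conj, mul_pow, Real.sq_sqrt hab]
  ring_nf

lemma norm_div_norm_sub_conj_hypMidpoint (ha : 0 < a.im) (hb : 0 < b.im) :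
    ‖a - hypMidpoint a b‖ / ‖a - conj (hypMidpoint a b)‖ =
      √((‖a - conj b‖ - 2 * √(a.im * b.im)) / (‖a - conj b‖ + 2 * √(a.im * b.im))) := by
  have hL : 0 < ‖a - conj b‖ := by linarith [add_im_le_norm_sub_conj a b]
  have hLu : 0 < ‖a - conj b‖ + 2 * √(a.im * b.im) := by positivity
  rw [norm_def, norm_def, ← Real.sqrt_div' _ (normSq_nonneg _), normSq_sub_hypMidpoint ha hb,
    normSq_sub_conj_hypMidpoint ha hb]
  congr 1
  field_simp

lemma rhoH_hypMidpoint_left (ha : 0 < a.im) (hb : 0 < b.im) :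
    rhoH a (hypMidpoint a b) = rhoH a b / 2 := by
  have hL : 0 < ‖a - conj b‖ := by linarith [add_im_le_norm_sub_conj a b]
  rw [rhoH, rhoH, norm_div_norm_sub_conj_hypMidpoint ha hb, norm_sub_eq_sqrt (mul_pos ha hb).le,
    ← two_mul_sqrt_div_one_add_sq (by positivity) (two_mul_sqrt_mul_le_norm_sub_conj ha hb) hL,
    artanh_two_mul_div_one_add_sq]
  ring

lemma rhoH_hypMidpoint_right (ha : 0 < a.im) (hb : 0 < b.im) :
    rhoH (hypMidpoint a b) b = rhoH a b / 2 := by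
  rw [rhoH_comm, hypMidpoint_comm, rhoH_hypMidpoint_left hb ha, rhoH_comm]

lemma hypMidpoint_im_pos (ha : 0 < a.im) (hb : 0 < b.im) : 0 < (hypMidpoint a b).im := by
  have hL : 0 < ‖a - conj b‖ := by linarith [add_im_le_norm_sub_conj a b]
  rw [hypMidpoint_im]
  positivity

end

theorem hyperbolic_midpoint (a b : ℂ) (hia : 0 < a.im) (hib : 0 < b.im)
    (m : ℂ)
    (hm : m = ((((a * b).im : ℝ) : ℂ) +
        Complex.I * ((‖a - conj b‖ * Real.sqrt (a.im * b.im) : ℝ) : ℂ)) /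
        ((((a + b).im : ℝ) : ℂ))) :
    0 < m.im ∧ rhoH a m = rhoH m b ∧ rhoH a m + rhoH m b = rhoH a b := by
  obtain rfl : m = hypMidpoint a b := hm
  rw [rhoH_hypMidpoint_left hia hib, rhoH_hypMidpoint_right hia hib]
  exact ⟨hypMidpoint_im_pos hia hib, rfl, add_halves _⟩
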